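/- Assume ρ₀ ≠ 0 and that S̄(x,t) ∩ supp ρ₀ is nonempty for every x ∈ ℝ and t > 0. If x ∈ ℝ is a continuity point of m₀ (equivalently ρ₀({x}) = 0), then lim_{t→0+} m̄(x,t) = m₀(x). Consequently the measures m̄(·,t)_x converge weakly to ρ₀ as t → 0+. -/

import Mathlib

open MeasureTheory Set Filter Topology

noncomputable def Mtot (ρ : Measure ℝ) : ℝ := (ρ Set.univ).toReal

noncomputable def m0 (ρ : Measure ℝ) (y : ℝ) : ℝ := (ρ (Set.Iio y)).toReal

noncomputable def m0p (ρ : Measure ℝ) (y : ℝ) : ℝ := (ρ (Set.Iic y)).toReal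

/-- `m̃₀(y) = (1/2)(ρ((−∞,y)) + ρ((−∞,y]) − M)`. -/
noncomputable def mtilde (ρ : Measure ℝ) (y : ℝ) : ℝ :=
  (m0 ρ y + m0p ρ y - Mtot ρ) / 2
/-- topological support of the measure. -/
def msupp (ρ : Measure ℝ) : Set ℝ := {x | ∀ U ∈ nhds x, 0 < ρ U}

/-- The drift potential `F̄(y;x,t)`. -/
noncomputable def Fbar (ρ : Measure ℝ) (y x t : ℝ) : ℝ :=
  ∫ η in Set.Iio y, (η - t * mtilde ρ η - x) ∂ρ

/-- The right-limit value `F̄(y+;x,t)` (integral over `(−∞,y]`). -/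
noncomputable def FbarP (ρ : Measure ℝ) (y x t : ℝ) : ℝ :=
  ∫ η in Set.Iic y, (η - t * mtilde ρ η - x) ∂ρ

/-- `ν̄(x,t) = inf_y F̄(y;x,t)`. -/
noncomputable def nuBar (ρ : Measure ℝ) (x t : ℝ) : ℝ := ⨅ y : ℝ, Fbar ρ y x t

/-- `S̄(x,t)`. -/
def SBar (ρ : Measure ℝ) (x t : ℝ) : Set ℝ :=
  {y | ∃ yn : ℕ → ℝ, Tendsto yn atTop (𝓝 y) ∧
    Tendsto (fun n => Fbar ρ (yn n) x t) atTop (𝓝 (nuBar ρ x t))}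

/-- `ȳ_*(x,t) = inf (S̄(x,t) ∩ supp ρ₀)`. -/
noncomputable def ybarStar (ρ : Measure ℝ) (x t : ℝ) : ℝ := sInf (SBar ρ x t ∩ msupp ρ)

/-- The mass `m̄(x,t)` of the drift equations. -/
noncomputable def mBar (ρ : Measure ℝ) (x t : ℝ) : ℝ :=
  if nuBar ρ x t = Fbar ρ (ybarStar ρ x t) x t then m0 ρ (ybarStar ρ x t)
  else m0p ρ (ybarStar ρ x t)

/-- The momentum `q̄(x,t)` of the drift equations. -/
noncomputable def qBar (ρ : Measure ℝ) (x t : ℝ) : ℝ :=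
  if nuBar ρ x t = Fbar ρ (ybarStar ρ x t) x t then
    -∫ η in Set.Iio (ybarStar ρ x t), mtilde ρ η ∂ρ
  else
    -∫ η in Set.Iic (ybarStar ρ x t), mtilde ρ η ∂ρ

section Base
variable (ρ : Measure ℝ) [IsFiniteMeasure ρ]

lemma m0_mono : Monotone (m0 ρ) := fun a b hab =>
  ENNReal.toReal_mono (measure_ne_top ρ _) (measure_mono (Set.Iio_subset_Iio hab))

lemma m0_nonneg (y : ℝ) : 0 ≤ m0 ρ y := ENNReal.toReal_nonneg
lemma m0p_nonneg (y : ℝ) : 0 ≤ m0p ρ y := ENNReal.toReal_nonneg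
lemma Mtot_nonneg : 0 ≤ Mtot ρ := ENNReal.toReal_nonneg

lemma measReal_le_Mtot (s : Set ℝ) : (ρ s).toReal ≤ Mtot ρ :=
  ENNReal.toReal_mono (measure_ne_top ρ _) (measure_mono (Set.subset_univ s))

lemma m0_le_Mtot (y : ℝ) : m0 ρ y ≤ Mtot ρ := measReal_le_Mtot ρ _
lemma m0p_le_Mtot (y : ℝ) : m0p ρ y ≤ Mtot ρ := measReal_le_Mtot ρ _

lemma m0_measurable : Measurable (m0 ρ) := (m0_mono ρ).measurable

lemma m0p_mono : Monotone (m0p ρ) := fun a b hab =>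
  ENNReal.toReal_mono (measure_ne_top ρ _) (measure_mono (Set.Iic_subset_Iic.2 hab))

lemma m0p_measurable : Measurable (m0p ρ) := (m0p_mono ρ).measurable

lemma mtilde_measurable : Measurable (mtilde ρ) := by
  unfold mtilde
  exact (((m0_measurable ρ).add (m0p_measurable ρ)).sub measurable_const).div_const 2

lemma abs_mtilde_le (y : ℝ) : |mtilde ρ y| ≤ Mtot ρ / 2 := by
  have h1 := m0_nonneg ρ y
  have h2 := m0p_nonneg ρ y
  have h3 := m0_le_Mtot ρ y
  have h4 := m0p_le_Mtot ρ y
  rw [abs_le]; unfold mtilde; constructor <;> nlinarith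

lemma mtilde_integrable : Integrable (mtilde ρ) ρ := by
  refine Integrable.mono' (integrable_const (Mtot ρ / 2)) ((mtilde_measurable ρ).aestronglyMeasurable) ?_
  exact Filter.Eventually.of_forall fun y => by simpa using abs_mtilde_le ρ y

lemma g_integrable (x t : ℝ) (hmom : Integrable (fun η : ℝ => η) ρ) :
    Integrable (fun η => η - t * mtilde ρ η - x) ρ :=
  (hmom.sub ((mtilde_integrable ρ).const_mul t)).sub (integrable_const x)

end Base

section Chunk2
variable (ρ : Measure ℝ) [IsFiniteMeasure ρ]

lemma Fbar_diff (x t : ℝ) (hmom : Integrable (fun η : ℝ => η) ρ) {a b : ℝ} (hab : a ≤ b) :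
    Fbar ρ b x t = Fbar ρ a x t + ∫ η in Set.Ico a b, (η - t * mtilde ρ η - x) ∂ρ := by
  have hg := g_integrable ρ x t hmom
  rw [Fbar, ← Set.Iio_union_Ico_eq_Iio hab,
    setIntegral_union ?_ measurableSet_Ico hg.integrableOn hg.integrableOn]
  · rfl
  · exact Set.disjoint_left.2 fun η (hη : η < a) hη2 => absurd hη2.1 (not_le.2 hη)

lemma FbarP_diff (x t : ℝ) (hmom : Integrable (fun η : ℝ => η) ρ) {a b : ℝ} (hab : a ≤ b) :
    FbarP ρ b x t = Fbar ρ a x t + ∫ η in Set.Icc a b, (η - t * mtilde ρ η - x) ∂ρ := by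
  have hg := g_integrable ρ x t hmom
  rw [FbarP, ← Set.Iio_union_Icc_eq_Iic hab,
    setIntegral_union ?_ measurableSet_Icc hg.integrableOn hg.integrableOn]
  · rfl
  · exact Set.disjoint_left.2 fun η (hη : η < a) hη2 => absurd hη2.1 (not_le.2 hη)

lemma Fbar_diffP (x t : ℝ) (hmom : Integrable (fun η : ℝ => η) ρ) {a b : ℝ} (hab : a < b) :
    Fbar ρ b x t = FbarP ρ a x t + ∫ η in Set.Ioo a b, (η - t * mtilde ρ η - x) ∂ρ := by
  have hg := g_integrable ρ x t hmom
  rw [Fbar, ← Set.Iic_union_Ioo_eq_Iio hab,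
    setIntegral_union ?_ measurableSet_Ioo hg.integrableOn hg.integrableOn]
  · rfl
  · exact Set.disjoint_left.2 fun η (hη : η ≤ a) hη2 => absurd hη2.1 (not_lt.2 hη)

lemma abs_Fbar_le (x t : ℝ) (hmom : Integrable (fun η : ℝ => η) ρ) (y : ℝ) :
    |Fbar ρ y x t| ≤ ∫ η, ‖η - t * mtilde ρ η - x‖ ∂ρ := by
  have hg := g_integrable ρ x t hmom
  rw [← Real.norm_eq_abs]
  calc ‖Fbar ρ y x t‖ ≤ ∫ η in Set.Iio y, ‖η - t * mtilde ρ η - x‖ ∂ρ :=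
        norm_integral_le_integral_norm _
    _ ≤ ∫ η, ‖η - t * mtilde ρ η - x‖ ∂ρ :=
        setIntegral_le_integral hg.norm (Filter.Eventually.of_forall fun η => norm_nonneg _)

lemma Fbar_bddBelow (x t : ℝ) (hmom : Integrable (fun η : ℝ => η) ρ) :
    BddBelow (Set.range fun y => Fbar ρ y x t) := by
  refine ⟨-(∫ η, ‖η - t * mtilde ρ η - x‖ ∂ρ), ?_⟩
  rintro v ⟨y, rfl⟩
  have := abs_Fbar_le ρ x t hmom y
  linarith [abs_le.1 this]

lemma nuBar_le (x t : ℝ) (hmom : Integrable (fun η : ℝ => η) ρ) (y : ℝ) :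
    nuBar ρ x t ≤ Fbar ρ y x t := ciInf_le (Fbar_bddBelow ρ x t hmom) y

lemma Fbar_tendsto_left (x t : ℝ) (hmom : Integrable (fun η : ℝ => η) ρ) {y : ℝ} {z : ℕ → ℝ}
    (hz : ∀ n, z n ≤ y) (hzy : Tendsto z atTop (𝓝 y)) :
    Tendsto (fun n => Fbar ρ (z n) x t) atTop (𝓝 (Fbar ρ y x t)) := by
  have hg := g_integrable ρ x t hmom
  set g : ℝ → ℝ := fun η => η - t * mtilde ρ η - x with hgdef
  have key : Tendsto (fun n => ∫ η, (Set.Iio (z n)).indicator g η ∂ρ) atTop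
      (𝓝 (∫ η, (Set.Iio y).indicator g η ∂ρ)) := by
    refine tendsto_integral_of_dominated_convergence (fun η => ‖g η‖)
      (fun n => hg.aestronglyMeasurable.indicator measurableSet_Iio) hg.norm
      (fun n => Filter.Eventually.of_forall fun η => norm_indicator_le_norm_self g η) ?_
    refine Filter.Eventually.of_forall fun η => ?_
    rcases lt_or_ge η y with hη | hη
    · have hev : ∀ᶠ n in atTop, η < z n := hzy (Ioi_mem_nhds hη)
      refine Tendsto.congr' (hev.mono fun n hn => (Set.indicator_of_mem (Set.mem_Iio.2 hn) g).symm) ?_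
      rw [Set.indicator_of_mem (Set.mem_Iio.2 hη) g]; exact tendsto_const_nhds
    · have h0 : ∀ n, (Set.Iio (z n)).indicator g η = 0 := fun n =>
        Set.indicator_of_notMem (show η ∉ Set.Iio (z n) from not_lt.2 ((hz n).trans hη)) g
      simp only [h0]
      rw [Set.indicator_of_notMem (show η ∉ Set.Iio y from not_lt.2 hη) g]
      exact tendsto_const_nhds
  simp only [integral_indicator measurableSet_Iio] at key; exact key

lemma Fbar_tendsto_right (x t : ℝ) (hmom : Integrable (fun η : ℝ => η) ρ) {y : ℝ} {z : ℕ → ℝ}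
    (hz : ∀ n, y < z n) (hzy : Tendsto z atTop (𝓝 y)) :
    Tendsto (fun n => Fbar ρ (z n) x t) atTop (𝓝 (FbarP ρ y x t)) := by
  have hg := g_integrable ρ x t hmom
  set g : ℝ → ℝ := fun η => η - t * mtilde ρ η - x with hgdef
  have key : Tendsto (fun n => ∫ η, (Set.Iio (z n)).indicator g η ∂ρ) atTop
      (𝓝 (∫ η, (Set.Iic y).indicator g η ∂ρ)) := by
    refine tendsto_integral_of_dominated_convergence (fun η => ‖g η‖)
      (fun n => hg.aestronglyMeasurable.indicator measurableSet_Iio) hg.norm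
      (fun n => Filter.Eventually.of_forall fun η => norm_indicator_le_norm_self g η) ?_
    refine Filter.Eventually.of_forall fun η => ?_
    rcases le_or_gt η y with hη | hη
    · have : ∀ n, (Set.Iio (z n)).indicator g η = g η := fun n =>
        Set.indicator_of_mem (Set.mem_Iio.2 (lt_of_le_of_lt hη (hz n))) g
      simp only [this, Set.indicator_of_mem (Set.mem_Iic.2 hη) g]
      exact tendsto_const_nhds
    · have hev : ∀ᶠ n in atTop, z n < η := hzy (Iio_mem_nhds hη)
      refine Tendsto.congr' (hev.mono fun n hn =>
        (Set.indicator_of_notMem (show η ∉ Set.Iio (z n) from not_lt.2 (le_of_lt hn)) g).symm) ?_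
      rw [Set.indicator_of_notMem (show η ∉ Set.Iic y from not_le.2 hη) g]
      exact tendsto_const_nhds
  simp only [integral_indicator measurableSet_Iio, integral_indicator measurableSet_Iic] at key; exact key

lemma nuBar_le_FbarP (x t : ℝ) (hmom : Integrable (fun η : ℝ => η) ρ) (y : ℝ) :
    nuBar ρ x t ≤ FbarP ρ y x t := by
  have hz : ∀ n : ℕ, y < y + 1 / (n + 1 : ℝ) := by
    intro n
    have h : (0:ℝ) < 1 / (n + 1 : ℝ) := by positivity
    linarith
  have hzy : Tendsto (fun n : ℕ => y + 1 / (n + 1 : ℝ)) atTop (𝓝 y) := by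
    have h := tendsto_one_div_add_atTop_nhds_zero_nat (𝕜 := ℝ)
    have := tendsto_const_nhds (x := y) (f := atTop (α := ℕ)) |>.add h
    simpa using this
  exact ge_of_tendsto (Fbar_tendsto_right ρ x t hmom hz hzy)
    (Filter.Eventually.of_forall fun n => nuBar_le ρ x t hmom _)

lemma SBar_value {x t : ℝ} (hmom : Integrable (fun η : ℝ => η) ρ) {y : ℝ}
    (hy : y ∈ SBar ρ x t) : nuBar ρ x t = Fbar ρ y x t ∨ nuBar ρ x t = FbarP ρ y x t := by
  obtain ⟨yn, hyn, hF⟩ := hy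
  by_cases h : ∃ᶠ n in atTop, yn n ≤ y
  · left
    obtain ⟨φ, hφ, hle⟩ := Filter.extraction_of_frequently_atTop h
    have h1 : Tendsto (fun k => Fbar ρ (yn (φ k)) x t) atTop (𝓝 (nuBar ρ x t)) :=
      hF.comp hφ.tendsto_atTop
    have h2 : Tendsto (fun k => Fbar ρ (yn (φ k)) x t) atTop (𝓝 (Fbar ρ y x t)) :=
      Fbar_tendsto_left ρ x t hmom hle (hyn.comp hφ.tendsto_atTop)
    exact tendsto_nhds_unique h1 h2
  · right
    rw [Filter.not_frequently] at h
    have h' : ∀ᶠ n in atTop, y < yn n := h.mono fun n hn => not_le.1 hn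
    obtain ⟨φ, hφ, hlt⟩ := Filter.extraction_of_frequently_atTop h'.frequently
    have h1 : Tendsto (fun k => Fbar ρ (yn (φ k)) x t) atTop (𝓝 (nuBar ρ x t)) :=
      hF.comp hφ.tendsto_atTop
    have h2 : Tendsto (fun k => Fbar ρ (yn (φ k)) x t) atTop (𝓝 (FbarP ρ y x t)) :=
      Fbar_tendsto_right ρ x t hmom hlt (hyn.comp hφ.tendsto_atTop)
    exact tendsto_nhds_unique h1 h2

end Chunk2

section Chunk3
variable (ρ : Measure ℝ) [IsFiniteMeasure ρ]

lemma setInt_le_const (x t : ℝ) (hmom : Integrable (fun η : ℝ => η) ρ) {s : Set ℝ}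
    (hs : MeasurableSet s) {c : ℝ} (hb : ∀ η ∈ s, η - t * mtilde ρ η - x ≤ c) :
    ∫ η in s, (η - t * mtilde ρ η - x) ∂ρ ≤ c * (ρ s).toReal := by
  have hg := g_integrable ρ x t hmom
  calc ∫ η in s, (η - t * mtilde ρ η - x) ∂ρ ≤ ∫ _ in s, c ∂ρ :=
        setIntegral_mono_on hg.integrableOn
          (integrableOn_const (measure_ne_top ρ s)) hs hb
    _ = c * (ρ s).toReal := by rw [setIntegral_const, smul_eq_mul, mul_comm, measureReal_def]

lemma setInt_ge_const (x t : ℝ) (hmom : Integrable (fun η : ℝ => η) ρ) {s : Set ℝ}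
    (hs : MeasurableSet s) {c : ℝ} (hb : ∀ η ∈ s, c ≤ η - t * mtilde ρ η - x) :
    c * (ρ s).toReal ≤ ∫ η in s, (η - t * mtilde ρ η - x) ∂ρ := by
  have hg := g_integrable ρ x t hmom
  calc c * (ρ s).toReal = ∫ _ in s, c ∂ρ := by rw [setIntegral_const, smul_eq_mul, mul_comm, measureReal_def]
    _ ≤ ∫ η in s, (η - t * mtilde ρ η - x) ∂ρ :=
        setIntegral_mono_on (integrableOn_const (measure_ne_top ρ s))
          hg.integrableOn hs hb

lemma SBar_isClosed (x t : ℝ) : IsClosed (SBar ρ x t) := by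
  refine IsSeqClosed.isClosed ?_
  intro u y hu huy
  have key : ∀ n : ℕ, ∃ w : ℝ, |w - u n| < 1 / (n + 1 : ℝ) ∧
      |Fbar ρ w x t - nuBar ρ x t| < 1 / (n + 1 : ℝ) := by
    intro n
    obtain ⟨yn, h1, h2⟩ := hu n
    have e : (0:ℝ) < 1 / (n + 1 : ℝ) := by positivity
    obtain ⟨N1, hN1⟩ := Metric.tendsto_atTop.1 h1 _ e
    obtain ⟨N2, hN2⟩ := Metric.tendsto_atTop.1 h2 _ e
    refine ⟨yn (max N1 N2), ?_, ?_⟩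
    · have := hN1 (max N1 N2) (le_max_left _ _)
      rwa [Real.dist_eq] at this
    · have := hN2 (max N1 N2) (le_max_right _ _)
      rwa [Real.dist_eq] at this
  choose w hw1 hw2 using key
  have hinv : Tendsto (fun n : ℕ => 1 / (n + 1 : ℝ)) atTop (𝓝 0) :=
    tendsto_one_div_add_atTop_nhds_zero_nat
  have t1 : Tendsto (fun n => w n - u n) atTop (𝓝 0) :=
    squeeze_zero_norm (fun n => le_of_lt (hw1 n)) hinv
  have t2 : Tendsto (fun n => Fbar ρ (w n) x t - nuBar ρ x t) atTop (𝓝 0) :=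
    squeeze_zero_norm (fun n => le_of_lt (hw2 n)) hinv
  refine ⟨w, ?_, ?_⟩
  · have := t1.add huy
    simpa using this
  · have := t2.add (tendsto_const_nhds (x := nuBar ρ x t) (f := atTop (α := ℕ)))
    simpa using this

lemma msupp_isClosed : IsClosed (msupp ρ) := by
  rw [← isOpen_compl_iff]
  rw [isOpen_iff_forall_mem_open]
  intro x hx
  simp only [Set.mem_compl_iff, msupp, Set.mem_setOf_eq, not_forall] at hx
  obtain ⟨U, hU, hU0⟩ := hx
  obtain ⟨V, hVU, hV, hxV⟩ := mem_nhds_iff.1 hU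
  refine ⟨V, ?_, hV, hxV⟩
  intro z hz
  simp only [Set.mem_compl_iff, msupp, Set.mem_setOf_eq, not_forall]
  refine ⟨V, hV.mem_nhds hz, ?_⟩
  intro hpos
  exact hU0 (lt_of_lt_of_le hpos (measure_mono hVU))

lemma tailAbs (x t : ℝ) (hmom : Integrable (fun η : ℝ => η) ρ) :
    Tendsto (fun n : ℕ => ∫ η in Set.Iio (-(n:ℝ)), ‖η - t * mtilde ρ η - x‖ ∂ρ) atTop (𝓝 0) := by
  have hg := (g_integrable ρ x t hmom).norm
  set G : ℝ → ℝ := fun η => ‖η - t * mtilde ρ η - x‖ with hGdef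
  have key : Tendsto (fun n : ℕ => ∫ η, (Set.Iio (-(n:ℝ))).indicator G η ∂ρ) atTop
      (𝓝 (∫ _ : ℝ, (0:ℝ) ∂ρ)) := by
    refine tendsto_integral_of_dominated_convergence G
      (fun n => hg.aestronglyMeasurable.indicator measurableSet_Iio) hg
      (fun n => Filter.Eventually.of_forall fun η => by
        simpa [hGdef, abs_abs] using norm_indicator_le_norm_self G η) ?_
    refine Filter.Eventually.of_forall fun η => ?_
    have hev : ∀ᶠ n : ℕ in atTop, (-η : ℝ) ≤ (n : ℝ) :=
      (tendsto_natCast_atTop_atTop (R := ℝ)).eventually_ge_atTop (-η)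
    refine Tendsto.congr' (hev.mono fun n hn => ?_) tendsto_const_nhds
    exact (Set.indicator_of_notMem (show η ∉ Set.Iio (-(n:ℝ)) from not_lt.2 (show (-(n:ℝ)) ≤ η by linarith)) G).symm
  rw [integral_zero] at key
  refine key.congr fun n => integral_indicator measurableSet_Iio

lemma abs_Fbar_le_tail (x t : ℝ) (hmom : Integrable (fun η : ℝ => η) ρ) {y b : ℝ} (hyb : y ≤ b) :
    |Fbar ρ y x t| ≤ ∫ η in Set.Iio b, ‖η - t * mtilde ρ η - x‖ ∂ρ := by
  have hg := g_integrable ρ x t hmom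
  rw [← Real.norm_eq_abs]
  calc ‖Fbar ρ y x t‖ ≤ ∫ η in Set.Iio y, ‖η - t * mtilde ρ η - x‖ ∂ρ :=
        norm_integral_le_integral_norm _
    _ ≤ ∫ η in Set.Iio b, ‖η - t * mtilde ρ η - x‖ ∂ρ :=
        setIntegral_mono_set hg.norm.integrableOn
          (Filter.Eventually.of_forall fun η => norm_nonneg _)
          (HasSubset.Subset.eventuallyLE (Set.Iio_subset_Iio hyb))

lemma abs_FbarP_le_tail (x t : ℝ) (hmom : Integrable (fun η : ℝ => η) ρ) {y b : ℝ} (hyb : y < b) :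
    |FbarP ρ y x t| ≤ ∫ η in Set.Iio b, ‖η - t * mtilde ρ η - x‖ ∂ρ := by
  have hg := g_integrable ρ x t hmom
  rw [← Real.norm_eq_abs]
  calc ‖FbarP ρ y x t‖ ≤ ∫ η in Set.Iic y, ‖η - t * mtilde ρ η - x‖ ∂ρ :=
        norm_integral_le_integral_norm _
    _ ≤ ∫ η in Set.Iio b, ‖η - t * mtilde ρ η - x‖ ∂ρ :=
        setIntegral_mono_set hg.norm.integrableOn
          (Filter.Eventually.of_forall fun η => norm_nonneg _)
          (HasSubset.Subset.eventuallyLE (fun η (hη : η ≤ y) => lt_of_le_of_lt hη hyb))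

lemma bddBelow_SBar_inter (x t : ℝ) (ht : 0 < t) (hmom : Integrable (fun η : ℝ => η) ρ) :
    BddBelow (SBar ρ x t ∩ msupp ρ) := by
  by_contra hb
  rw [not_bddBelow_iff] at hb
  set M := Mtot ρ with hM
  have hM0 : 0 ≤ M := Mtot_nonneg ρ
  -- ν̄ = 0
  have hnu : nuBar ρ x t = 0 := by
    have habs : ∀ n : ℕ, |nuBar ρ x t| ≤ ∫ η in Set.Iio (-(n:ℝ)), ‖η - t * mtilde ρ η - x‖ ∂ρ := by
      intro n
      obtain ⟨y, ⟨hyS, _⟩, hy⟩ := hb (-(n:ℝ) - 1)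
      rcases SBar_value ρ hmom hyS with h | h
      · rw [h]; exact abs_Fbar_le_tail ρ x t hmom (by linarith)
      · rw [h]; exact abs_FbarP_le_tail ρ x t hmom (by linarith)
    have hle : |nuBar ρ x t| ≤ 0 :=
      ge_of_tendsto (tailAbs ρ x t hmom) (Filter.Eventually.of_forall habs)
    have := abs_nonneg (nuBar ρ x t)
    rw [abs_eq_zero.1 (le_antisymm hle this)]
  -- deep support point
  obtain ⟨y, ⟨_, hysupp⟩, hy⟩ := hb (x - t * M / 2 - 2)
  set z := y + 1 with hzdef
  have hz1 : z - x + t * M / 2 ≤ -1 := by simp only [hzdef]; linarith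
  have hzpos : 0 < ρ (Set.Iio z) := by
    refine lt_of_lt_of_le (hysupp (Set.Ioo (y-1) z) (Ioo_mem_nhds (by linarith) (by linarith))) ?_
    exact measure_mono fun η hη => hη.2
  -- find k with positive mass in Ico (z - k) z
  have hex : ∃ k : ℕ, 0 < ρ (Set.Ico (z - k) z) := by
    by_contra hk
    push_neg at hk
    have hk0 : ∀ k : ℕ, ρ (Set.Ico (z - k) z) = 0 := fun k => le_antisymm (hk k) zero_le
    have hcover : Set.Iio z ⊆ ⋃ k : ℕ, Set.Ico (z - k) z := by
      intro η hη
      obtain ⟨k, hk'⟩ := exists_nat_ge (z - η)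
      exact Set.mem_iUnion.2 ⟨k, ⟨by linarith, hη⟩⟩
    have : ρ (Set.Iio z) = 0 :=
      le_antisymm (le_trans (measure_mono hcover) (le_of_eq (measure_iUnion_null hk0))) zero_le
    exact absurd this hzpos.ne'
  obtain ⟨k, hk⟩ := hex
  set c := (ρ (Set.Ico (z - k) z)).toReal with hc
  have hcpos : 0 < c := ENNReal.toReal_pos hk.ne' (measure_ne_top ρ _)
  -- g ≤ -1 below z
  have hgle : ∀ η : ℝ, η < z → η - t * mtilde ρ η - x ≤ -1 := by
    intro η hη
    have h1 := abs_le.1 (abs_mtilde_le ρ η)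
    nlinarith [h1.1, h1.2, ht.le,
      mul_nonneg ht.le (show (0:ℝ) ≤ mtilde ρ η + Mtot ρ / 2 by linarith [h1.1])]
  -- pick n with -n ≤ z - k and tail < c/2
  have htail := tailAbs ρ x t hmom
  have hev1 : ∀ᶠ n : ℕ in atTop, ∫ η in Set.Iio (-(n:ℝ)), ‖η - t * mtilde ρ η - x‖ ∂ρ < c / 2 := by
    have := htail (Iio_mem_nhds (show (0:ℝ) < c / 2 by linarith))
    simpa using this
  have hev2 : ∀ᶠ n : ℕ in atTop, -(n:ℝ) ≤ z - k :=
    ((tendsto_natCast_atTop_atTop (R := ℝ)).eventually_ge_atTop (k - z)).mono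
      fun n hn => by linarith
  obtain ⟨n, h1, h2⟩ := (hev1.and hev2).exists
  -- assemble
  have hzw : (-(n:ℝ)) ≤ z := by
    have : (z : ℝ) - k ≤ z := by
      have : (0:ℝ) ≤ k := Nat.cast_nonneg k
      linarith
    linarith
  have hsplit := Fbar_diff ρ x t hmom hzw
  have hbound : ∫ η in Set.Ico (-(n:ℝ)) z, (η - t * mtilde ρ η - x) ∂ρ
      ≤ (-1) * (ρ (Set.Ico (-(n:ℝ)) z)).toReal :=
    setInt_le_const ρ x t hmom measurableSet_Ico fun η hη => hgle η hη.2
  have hmass : c ≤ (ρ (Set.Ico (-(n:ℝ)) z)).toReal := by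
    refine ENNReal.toReal_mono (measure_ne_top ρ _) (measure_mono ?_)
    exact fun η hη => ⟨le_trans h2 hη.1, hη.2⟩
  have hFn : |Fbar ρ (-(n:ℝ)) x t| ≤ ∫ η in Set.Iio (-(n:ℝ)), ‖η - t * mtilde ρ η - x‖ ∂ρ :=
    abs_Fbar_le_tail ρ x t hmom le_rfl
  have hnuz : nuBar ρ x t ≤ Fbar ρ z x t := nuBar_le ρ x t hmom z
  rw [hnu] at hnuz
  have habs := abs_le.1 (le_trans hFn (le_of_lt h1))
  linarith [hsplit, hbound, hmass, habs.2]

lemma ybarStar_mem (x t : ℝ) (ht : 0 < t) (hmom : Integrable (fun η : ℝ => η) ρ)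
    (hne : (SBar ρ x t ∩ msupp ρ).Nonempty) :
    ybarStar ρ x t ∈ SBar ρ x t ∩ msupp ρ :=
  IsClosed.csInf_mem ((SBar_isClosed ρ x t).inter (msupp_isClosed ρ)) hne
    (bddBelow_SBar_inter ρ x t ht hmom)

end Chunk3

section Chunk4
variable (ρ : Measure ℝ) [IsFiniteMeasure ρ]

lemma shrink_aux {s : ℕ → Set ℝ} (hmeas : ∀ n, MeasurableSet (s n)) (hanti : Antitone s)
    (h0 : ρ (⋂ n, s n) = 0) :
    Tendsto (fun n : ℕ => (ρ (s n)).toReal) atTop (𝓝 0) := by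
  have h := tendsto_measure_iInter_atTop (μ := ρ) (fun n => (hmeas n).nullMeasurableSet) hanti
    ⟨0, measure_ne_top ρ _⟩
  rw [h0] at h
  have h2 := (ENNReal.tendsto_toReal (show (0:ENNReal) ≠ ⊤ by simp)).comp h
  simpa [Function.comp_def] using h2

lemma inv_succ_pos (n : ℕ) : (0:ℝ) < 1 / (n + 1 : ℝ) := by positivity

lemma inv_succ_tendsto : Tendsto (fun n : ℕ => 1 / (n + 1 : ℝ)) atTop (𝓝 0) :=
  tendsto_one_div_add_atTop_nhds_zero_nat

lemma shrink_left (x : ℝ) :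
    Tendsto (fun n : ℕ => (ρ (Set.Ico (x - 1/(n+1 : ℝ)) x)).toReal) atTop (𝓝 0) := by
  refine shrink_aux ρ (fun n => measurableSet_Ico) ?_ ?_
  · intro n m hnm η hη
    have h1 : 1/(m+1 : ℝ) ≤ 1/(n+1 : ℝ) := by
      apply one_div_le_one_div_of_le (by positivity)
      exact_mod_cast by exact_mod_cast add_le_add_left (Nat.cast_le.2 hnm) 1
    exact ⟨by linarith [hη.1], hη.2⟩
  · have hempty : (⋂ n : ℕ, Set.Ico (x - 1/(n+1 : ℝ)) x) = ∅ := by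
      apply Set.eq_empty_iff_forall_notMem.2
      intro η hη
      simp only [Set.mem_iInter, Set.mem_Ico] at hη
      have h1 : ∀ n : ℕ, x - η ≤ 1/(n+1 : ℝ) := fun n => by linarith [(hη n).1]
      have h2 : x - η ≤ 0 := ge_of_tendsto inv_succ_tendsto (Filter.Eventually.of_forall h1)
      linarith [(hη 0).2]
    rw [hempty, measure_empty]

lemma shrink_right (x : ℝ) (hx : ρ {x} = 0) :
    Tendsto (fun n : ℕ => (ρ (Set.Icc x (x + 1/(n+1 : ℝ)))).toReal) atTop (𝓝 0) := by
  refine shrink_aux ρ (fun n => measurableSet_Icc) ?_ ?_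
  · intro n m hnm η hη
    have h1 : 1/(m+1 : ℝ) ≤ 1/(n+1 : ℝ) := by
      apply one_div_le_one_div_of_le (by positivity)
      exact_mod_cast by exact_mod_cast add_le_add_left (Nat.cast_le.2 hnm) 1
    exact ⟨hη.1, by linarith [hη.2]⟩
  · have : (⋂ n : ℕ, Set.Icc x (x + 1/(n+1 : ℝ))) = {x} := by
      ext η
      simp only [Set.mem_iInter, Set.mem_Icc, Set.mem_singleton_iff]
      constructor
      · intro hη
        have h1 : ∀ n : ℕ, η - x ≤ 1/(n+1 : ℝ) := fun n => by linarith [(hη n).2]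
        have h2 : η - x ≤ 0 := ge_of_tendsto inv_succ_tendsto (Filter.Eventually.of_forall h1)
        linarith [(hη 0).1]
      · rintro rfl
        exact fun n => ⟨le_rfl, by linarith [inv_succ_pos n]⟩
    rw [this, hx]

lemma m0p_x_eq (x : ℝ) (hx : ρ {x} = 0) : m0p ρ x = m0 ρ x := by
  unfold m0p m0
  rw [← Set.Iio_union_right, measure_union ?_ (measurableSet_singleton x), hx, add_zero]
  exact Set.disjoint_left.2 fun η (hη : η < x) (hη2 : η ∈ ({x} : Set ℝ)) => by
    rw [Set.mem_singleton_iff] at hη2; exact absurd hη2 (ne_of_lt hη)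

set_option maxHeartbeats 2000000 in
lemma main_est (x : ℝ) (hx : ρ {x} = 0) (hmom : Integrable (fun η : ℝ => η) ρ)
    (hne : ∀ t : ℝ, 0 < t → (SBar ρ x t ∩ msupp ρ).Nonempty) :
    ∀ ε : ℝ, 0 < ε → ∃ T : ℝ, 0 < T ∧ ∀ t : ℝ, 0 < t → t < T → |mBar ρ x t - m0 ρ x| < ε := by
  intro ε hε
  set M := Mtot ρ with hM
  have hM0 : 0 ≤ M := Mtot_nonneg ρ
  -- choose δ
  obtain ⟨n, hn1, hn2⟩ := (((shrink_left ρ x).eventually_lt_const (half_pos hε)).and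
    ((shrink_right ρ x hx).eventually_lt_const (half_pos hε))).exists
  set δ := 1/(n+1 : ℝ) with hδ
  have hδ0 : 0 < δ := inv_succ_pos n
  refine ⟨min (δ/(M+1)) (δ*ε/(2*(M+1)^2)), by positivity, ?_⟩
  intro t ht htT
  have htM : t * M < δ := by
    have h1 : t < δ/(M+1) := lt_of_lt_of_le htT (min_le_left _ _)
    have h2 : t * (M+1) < δ := by
      rw [← lt_div_iff₀ (by linarith)]
      exact h1
    nlinarith
  have htM2 : t * M^2 < δ * ε / 2 := by
    have h1 : t < δ*ε/(2*(M+1)^2) := lt_of_lt_of_le htT (min_le_right _ _)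
    have h2 : t * (2*(M+1)^2) < δ*ε := by
      rw [← lt_div_iff₀ (by positivity)]
      exact h1
    nlinarith
  by_contra hcon
  push_neg at hcon
  set y := ybarStar ρ x t with hy
  -- bounds on the integrand
  have hup : ∀ η : ℝ, η < x → η - t * mtilde ρ η - x ≤ t*M/2 := by
    intro η hη
    have h1 := abs_le.1 (abs_mtilde_le ρ η)
    nlinarith [mul_nonneg ht.le (show (0:ℝ) ≤ M/2 - mtilde ρ η by linarith [h1.2])]
  have hup2 : ∀ η : ℝ, η < x - δ → η - t * mtilde ρ η - x ≤ -δ + t*M/2 := by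
    intro η hη
    have h1 := abs_le.1 (abs_mtilde_le ρ η)
    nlinarith [mul_nonneg ht.le (show (0:ℝ) ≤ M/2 - mtilde ρ η by linarith [h1.2])]
  have hlo : ∀ η : ℝ, x ≤ η → -(t*M/2) ≤ η - t * mtilde ρ η - x := by
    intro η hη
    have h1 := abs_le.1 (abs_mtilde_le ρ η)
    nlinarith [mul_nonneg ht.le (show (0:ℝ) ≤ M/2 + mtilde ρ η by linarith [h1.1])]
  have hlo2 : ∀ η : ℝ, x + δ ≤ η → δ - t*M/2 ≤ η - t * mtilde ρ η - x := by
    intro η hη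
    have h1 := abs_le.1 (abs_mtilde_le ρ η)
    nlinarith [mul_nonneg ht.le (show (0:ℝ) ≤ M/2 + mtilde ρ η by linarith [h1.1])]
  have addm : ∀ s u : Set ℝ, Disjoint s u → MeasurableSet u →
      (ρ (s ∪ u)).toReal = (ρ s).toReal + (ρ u).toReal := by
    intro s u hd hu
    rw [measure_union hd hu, ENNReal.toReal_add (measure_ne_top ρ s) (measure_ne_top ρ u)]
  have hnux : nuBar ρ x t ≤ Fbar ρ x x t := nuBar_le ρ x t hmom x
  by_cases hbr : nuBar ρ x t = Fbar ρ y x t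
  · -- branch 1 : mBar = m0 ρ y
    have hmB : mBar ρ x t = m0 ρ y := by rw [mBar, ← hy, if_pos hbr]
    rw [hmB] at hcon
    rcases le_abs.1 hcon with hgt | hlt
    · -- m0 ρ y ≥ m0 ρ x + ε  : y far right
      have hxy : x < y := by
        by_contra h
        push_neg at h
        have := m0_mono ρ h
        linarith
      have hmass : (ρ (Set.Ico x y)).toReal = m0 ρ y - m0 ρ x := by
        have h1 := addm (Set.Iio x) (Set.Ico x y)
          (Set.disjoint_left.2 fun η (h : η < x) h2 => absurd h2.1 (not_le.2 h))
          measurableSet_Ico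
        rw [Set.Iio_union_Ico_eq_Iio hxy.le] at h1
        unfold m0; linarith [h1]
      have hyd : x + δ < y := by
        by_contra h
        push_neg at h
        have hsub : Set.Ico x y ⊆ Set.Icc x (x+δ) := fun η hη => ⟨hη.1, by linarith [hη.2]⟩
        have := ENNReal.toReal_mono (measure_ne_top ρ _) (measure_mono hsub)
        linarith
      have hmass2 : ε/2 ≤ (ρ (Set.Ico (x+δ) y)).toReal := by
        have h1 := addm (Set.Ico x (x+δ)) (Set.Ico (x+δ) y)
          (Set.disjoint_left.2 fun η h h2 => absurd h2.1 (not_le.2 h.2))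
          measurableSet_Ico
        rw [Set.Ico_union_Ico_eq_Ico (by linarith) hyd.le] at h1
        have hsub : Set.Ico x (x+δ) ⊆ Set.Icc x (x+δ) := fun η hη => ⟨hη.1, hη.2.le⟩
        have h2 := ENNReal.toReal_mono (measure_ne_top ρ _) (measure_mono hsub)
        linarith
      have hsplit1 := Fbar_diff ρ x t hmom (show x ≤ x + δ by linarith)
      have hsplit2 := Fbar_diff ρ x t hmom hyd.le
      have hb1 : -(t*M/2) * (ρ (Set.Ico x (x+δ))).toReal
          ≤ ∫ η in Set.Ico x (x+δ), (η - t * mtilde ρ η - x) ∂ρ :=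
        setInt_ge_const ρ x t hmom measurableSet_Ico fun η hη => hlo η hη.1
      have hb2 : (δ - t*M/2) * (ρ (Set.Ico (x+δ) y)).toReal
          ≤ ∫ η in Set.Ico (x+δ) y, (η - t * mtilde ρ η - x) ∂ρ :=
        setInt_ge_const ρ x t hmom measurableSet_Ico fun η hη => hlo2 η hη.1
      have hρ1 : (ρ (Set.Ico x (x+δ))).toReal ≤ M := measReal_le_Mtot ρ _
      have hρ1' : 0 ≤ (ρ (Set.Ico x (x+δ))).toReal := ENNReal.toReal_nonneg
      have hρ2 : (ρ (Set.Ico (x+δ) y)).toReal ≤ M := measReal_le_Mtot ρ _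
      have hnuy : nuBar ρ x t ≤ Fbar ρ x x t := hnux
      rw [hbr] at hnuy
      -- Fbar y = Fbar x + ∫Ico x (x+δ) + ∫Ico (x+δ) y
      rw [hsplit1] at hsplit2
      have hc1 : -(t*M/2) * M ≤ -(t*M/2) * (ρ (Set.Ico x (x+δ))).toReal := by
        apply mul_le_mul_of_nonpos_left hρ1
        nlinarith [mul_nonneg ht.le hM0]
      have hc2 : (δ/2) * (ε/2) ≤ (δ - t*M/2) * (ρ (Set.Ico (x+δ) y)).toReal := by
        apply mul_le_mul (by nlinarith) hmass2 (by linarith) (by nlinarith)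
      nlinarith [hsplit2, hb1, hb2, hnuy, htM2, hc1, hc2]
    · -- m0 ρ y ≤ m0 ρ x - ε : y far left
      have hyx : y < x := by
        by_contra h
        push_neg at h
        have := m0_mono ρ h
        linarith
      have hmass : (ρ (Set.Ico y x)).toReal = m0 ρ x - m0 ρ y := by
        have h1 := addm (Set.Iio y) (Set.Ico y x)
          (Set.disjoint_left.2 fun η (h : η < y) h2 => absurd h2.1 (not_le.2 h))
          measurableSet_Ico
        rw [Set.Iio_union_Ico_eq_Iio hyx.le] at h1
        unfold m0; linarith [h1]
      have hyd : y < x - δ := by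
        by_contra h
        push_neg at h
        have hsub : Set.Ico y x ⊆ Set.Ico (x-δ) x := fun η hη => ⟨by linarith [hη.1], hη.2⟩
        have := ENNReal.toReal_mono (measure_ne_top ρ _) (measure_mono hsub)
        linarith
      have hmass2 : ε/2 ≤ (ρ (Set.Ico y (x-δ))).toReal := by
        have h1 := addm (Set.Ico y (x-δ)) (Set.Ico (x-δ) x)
          (Set.disjoint_left.2 fun η h h2 => absurd h2.1 (not_le.2 h.2))
          measurableSet_Ico
        rw [Set.Ico_union_Ico_eq_Ico hyd.le (by linarith)] at h1
        linarith
      have hsplit1 := Fbar_diff ρ x t hmom (show y ≤ x - δ from hyd.le)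
      have hsplit2 := Fbar_diff ρ x t hmom (show x - δ ≤ x by linarith)
      have hb1 : ∫ η in Set.Ico y (x-δ), (η - t * mtilde ρ η - x) ∂ρ
          ≤ (-δ + t*M/2) * (ρ (Set.Ico y (x-δ))).toReal :=
        setInt_le_const ρ x t hmom measurableSet_Ico fun η hη => hup2 η hη.2
      have hb2 : ∫ η in Set.Ico (x-δ) x, (η - t * mtilde ρ η - x) ∂ρ
          ≤ (t*M/2) * (ρ (Set.Ico (x-δ) x)).toReal :=
        setInt_le_const ρ x t hmom measurableSet_Ico fun η hη => hup η hη.2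
      have hρ1 : (ρ (Set.Ico (x-δ) x)).toReal ≤ M := measReal_le_Mtot ρ _
      have hρ1' : 0 ≤ (ρ (Set.Ico (x-δ) x)).toReal := ENNReal.toReal_nonneg
      have hnuy := hnux
      rw [hbr] at hnuy
      -- Fbar x = Fbar (x-δ) + ∫Ico (x-δ) x ; Fbar (x-δ) = Fbar y + ∫Ico y (x-δ)
      rw [hsplit1] at hsplit2
      have hc1 : (-δ + t*M/2) * (ρ (Set.Ico y (x-δ))).toReal ≤ -(δ/2) * (ε/2) := by
        have p1 : (-δ + t*M/2) * (ρ (Set.Ico y (x-δ))).toReal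
            ≤ -(δ/2) * (ρ (Set.Ico y (x-δ))).toReal :=
          mul_le_mul_of_nonneg_right (by nlinarith) ENNReal.toReal_nonneg
        have p2 : -(δ/2) * (ρ (Set.Ico y (x-δ))).toReal ≤ -(δ/2) * (ε/2) :=
          mul_le_mul_of_nonpos_left hmass2 (by linarith)
        linarith
      have hc2 : (t*M/2) * (ρ (Set.Ico (x-δ) x)).toReal ≤ (t*M/2) * M :=
        mul_le_mul_of_nonneg_left hρ1 (by nlinarith [mul_nonneg ht.le hM0])
      nlinarith [hsplit2, hb1, hb2, hnuy, htM2, hc1, hc2]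
  · -- branch 2 : mBar = m0p ρ y and nuBar = FbarP y
    have hmB : mBar ρ x t = m0p ρ y := by rw [mBar, ← hy, if_neg hbr]
    have hyS : y ∈ SBar ρ x t := (ybarStar_mem ρ x t ht hmom (hne t ht)).1
    have hνP : nuBar ρ x t = FbarP ρ y x t := by
      rcases SBar_value ρ hmom hyS with h | h
      · exact absurd h hbr
      · exact h
    rw [hmB] at hcon
    rcases le_abs.1 hcon with hgt | hlt
    · -- m0p ρ y ≥ m0 ρ x + ε : y far right
      have hxy : x ≤ y := by
        by_contra h
        push_neg at h
        have : m0p ρ y ≤ m0 ρ x :=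
          ENNReal.toReal_mono (measure_ne_top ρ _) (measure_mono fun η (hη : η ≤ y) =>
            lt_of_le_of_lt hη h)
        linarith
      have hmass : (ρ (Set.Ioc x y)).toReal = m0p ρ y - m0 ρ x := by
        have h1 := addm (Set.Iic x) (Set.Ioc x y)
          (Set.disjoint_left.2 fun η (h : η ≤ x) h2 => absurd h2.1 (not_lt.2 h))
          measurableSet_Ioc
        rw [Set.Iic_union_Ioc_eq_Iic hxy] at h1
        have h2 := m0p_x_eq ρ x hx
        simp only [m0p, m0] at h2 ⊢
        linarith [h1, h2]
      have hyd : x + δ < y := by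
        by_contra h
        push_neg at h
        have hsub : Set.Ioc x y ⊆ Set.Icc x (x+δ) := fun η hη => ⟨hη.1.le, by linarith [hη.2]⟩
        have := ENNReal.toReal_mono (measure_ne_top ρ _) (measure_mono hsub)
        linarith
      have hmass2 : ε/2 ≤ (ρ (Set.Icc (x+δ) y)).toReal := by
        have h1 := addm (Set.Ioc x (x+δ)) (Set.Ioc (x+δ) y)
          (Set.disjoint_left.2 fun η h h2 => absurd h2.1 (not_lt.2 h.2))
          measurableSet_Ioc
        rw [Set.Ioc_union_Ioc_eq_Ioc (by linarith) hyd.le] at h1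
        have hsub1 : Set.Ioc x (x+δ) ⊆ Set.Icc x (x+δ) := fun η hη => ⟨hη.1.le, hη.2⟩
        have h2 := ENNReal.toReal_mono (measure_ne_top ρ _) (measure_mono hsub1)
        have hsub2 : Set.Ioc (x+δ) y ⊆ Set.Icc (x+δ) y := fun η hη => ⟨hη.1.le, hη.2⟩
        have h3 := ENNReal.toReal_mono (measure_ne_top ρ _) (measure_mono hsub2)
        linarith
      have hsplitP := FbarP_diff ρ x t hmom hxy
      -- Icc x y = Ico x (x+δ) ∪ Icc (x+δ) y
      have hun : Set.Ico x (x+δ) ∪ Set.Icc (x+δ) y = Set.Icc x y :=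
        Set.Ico_union_Icc_eq_Icc (by linarith) hyd.le
      have hg := g_integrable ρ x t hmom
      have hsplitI : ∫ η in Set.Icc x y, (η - t * mtilde ρ η - x) ∂ρ
          = (∫ η in Set.Ico x (x+δ), (η - t * mtilde ρ η - x) ∂ρ)
            + ∫ η in Set.Icc (x+δ) y, (η - t * mtilde ρ η - x) ∂ρ := by
        rw [← hun, setIntegral_union
          (Set.disjoint_left.2 fun η h h2 => absurd h2.1 (not_le.2 h.2)) measurableSet_Icc
          hg.integrableOn hg.integrableOn]
      have hb1 : -(t*M/2) * (ρ (Set.Ico x (x+δ))).toReal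
          ≤ ∫ η in Set.Ico x (x+δ), (η - t * mtilde ρ η - x) ∂ρ :=
        setInt_ge_const ρ x t hmom measurableSet_Ico fun η hη => hlo η hη.1
      have hb2 : (δ - t*M/2) * (ρ (Set.Icc (x+δ) y)).toReal
          ≤ ∫ η in Set.Icc (x+δ) y, (η - t * mtilde ρ η - x) ∂ρ :=
        setInt_ge_const ρ x t hmom measurableSet_Icc fun η hη => hlo2 η hη.1
      have hρ1 : (ρ (Set.Ico x (x+δ))).toReal ≤ M := measReal_le_Mtot ρ _
      have hρ1' : 0 ≤ (ρ (Set.Ico x (x+δ))).toReal := ENNReal.toReal_nonneg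
      have hnuy := hnux
      rw [hνP] at hnuy
      have hc1 : -(t*M/2) * M ≤ -(t*M/2) * (ρ (Set.Ico x (x+δ))).toReal := by
        apply mul_le_mul_of_nonpos_left hρ1
        nlinarith [mul_nonneg ht.le hM0]
      have hc2 : (δ/2) * (ε/2) ≤ (δ - t*M/2) * (ρ (Set.Icc (x+δ) y)).toReal := by
        apply mul_le_mul (by nlinarith) hmass2 (by linarith) (by nlinarith)
      nlinarith [hsplitP, hsplitI, hb1, hb2, hnuy, htM2, hc1, hc2]
    · -- m0p ρ y ≤ m0 ρ x - ε : y far left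
      have hyx : y < x := by
        by_contra h
        push_neg at h
        have : m0 ρ x ≤ m0p ρ y :=
          ENNReal.toReal_mono (measure_ne_top ρ _) (measure_mono fun η (hη : η < x) =>
            le_trans hη.le h)
        linarith
      have hmass : (ρ (Set.Ioo y x)).toReal = m0 ρ x - m0p ρ y := by
        have h1 := addm (Set.Iic y) (Set.Ioo y x)
          (Set.disjoint_left.2 fun η (h : η ≤ y) h2 => absurd h2.1 (not_lt.2 h))
          measurableSet_Ioo
        rw [Set.Iic_union_Ioo_eq_Iio hyx] at h1
        simp only [m0, m0p]
        linarith [h1]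
      have hyd : y < x - δ := by
        by_contra h
        push_neg at h
        have hsub : Set.Ioo y x ⊆ Set.Ico (x-δ) x := fun η hη => ⟨by linarith [hη.1], hη.2⟩
        have := ENNReal.toReal_mono (measure_ne_top ρ _) (measure_mono hsub)
        linarith
      have hmass2 : ε/2 ≤ (ρ (Set.Ioo y (x-δ))).toReal := by
        have h1 := addm (Set.Ioo y (x-δ)) (Set.Ico (x-δ) x)
          (Set.disjoint_left.2 fun η h h2 => absurd h2.1 (not_le.2 h.2))
          measurableSet_Ico
        rw [Set.Ioo_union_Ico_eq_Ioo hyd (by linarith)] at h1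
        linarith
      have hsplitP := Fbar_diffP ρ x t hmom hyx
      have hun : Set.Ioo y (x-δ) ∪ Set.Ico (x-δ) x = Set.Ioo y x :=
        Set.Ioo_union_Ico_eq_Ioo hyd (by linarith)
      have hg := g_integrable ρ x t hmom
      have hsplitI : ∫ η in Set.Ioo y x, (η - t * mtilde ρ η - x) ∂ρ
          = (∫ η in Set.Ioo y (x-δ), (η - t * mtilde ρ η - x) ∂ρ)
            + ∫ η in Set.Ico (x-δ) x, (η - t * mtilde ρ η - x) ∂ρ := by
        rw [← hun, setIntegral_union
          (Set.disjoint_left.2 fun η h h2 => absurd h2.1 (not_le.2 h.2)) measurableSet_Ico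
          hg.integrableOn hg.integrableOn]
      have hb1 : ∫ η in Set.Ioo y (x-δ), (η - t * mtilde ρ η - x) ∂ρ
          ≤ (-δ + t*M/2) * (ρ (Set.Ioo y (x-δ))).toReal :=
        setInt_le_const ρ x t hmom measurableSet_Ioo fun η hη => hup2 η hη.2
      have hb2 : ∫ η in Set.Ico (x-δ) x, (η - t * mtilde ρ η - x) ∂ρ
          ≤ (t*M/2) * (ρ (Set.Ico (x-δ) x)).toReal :=
        setInt_le_const ρ x t hmom measurableSet_Ico fun η hη => hup η hη.2
      have hρ1 : (ρ (Set.Ico (x-δ) x)).toReal ≤ M := measReal_le_Mtot ρ _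
      have hρ1' : 0 ≤ (ρ (Set.Ico (x-δ) x)).toReal := ENNReal.toReal_nonneg
      have hnuy := hnux
      rw [hνP] at hnuy
      have hc1 : (-δ + t*M/2) * (ρ (Set.Ioo y (x-δ))).toReal ≤ -(δ/2) * (ε/2) := by
        have p1 : (-δ + t*M/2) * (ρ (Set.Ioo y (x-δ))).toReal
            ≤ -(δ/2) * (ρ (Set.Ioo y (x-δ))).toReal :=
          mul_le_mul_of_nonneg_right (by nlinarith) ENNReal.toReal_nonneg
        have p2 : -(δ/2) * (ρ (Set.Ioo y (x-δ))).toReal ≤ -(δ/2) * (ε/2) :=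
          mul_le_mul_of_nonpos_left hmass2 (by linarith)
        linarith
      have hc2 : (t*M/2) * (ρ (Set.Ico (x-δ) x)).toReal ≤ (t*M/2) * M :=
        mul_le_mul_of_nonneg_left hρ1 (by nlinarith [mul_nonneg ht.le hM0])
      nlinarith [hsplitP, hsplitI, hb1, hb2, hnuy, htM2, hc1, hc2]

end Chunk4

section Chunk5
variable (ρ : Measure ℝ) [IsFiniteMeasure ρ]

lemma Fbar_translate (y x x' t : ℝ) (hmom : Integrable (fun η : ℝ => η) ρ) :
    Fbar ρ y x' t = Fbar ρ y x t - (x' - x) * m0 ρ y := by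
  have hg := g_integrable ρ x t hmom
  have : ∀ η : ℝ, η - t * mtilde ρ η - x' = (η - t * mtilde ρ η - x) - (x' - x) := by
    intro η; ring
  rw [Fbar]
  simp_rw [this]
  rw [integral_sub hg.integrableOn (integrableOn_const (measure_ne_top ρ _)),
    setIntegral_const, smul_eq_mul, measureReal_def]
  rw [Fbar, m0, mul_comm]

lemma FbarP_translate (y x x' t : ℝ) (hmom : Integrable (fun η : ℝ => η) ρ) :
    FbarP ρ y x' t = FbarP ρ y x t - (x' - x) * m0p ρ y := by
  have hg := g_integrable ρ x t hmom
  have : ∀ η : ℝ, η - t * mtilde ρ η - x' = (η - t * mtilde ρ η - x) - (x' - x) := by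
    intro η; ring
  rw [FbarP]
  simp_rw [this]
  rw [integral_sub hg.integrableOn (integrableOn_const (measure_ne_top ρ _)),
    setIntegral_const, smul_eq_mul, measureReal_def]
  rw [FbarP, m0p, mul_comm]

lemma nuBar_K (x x' t : ℝ) (ht : 0 < t) (hmom : Integrable (fun η : ℝ => η) ρ)
    (hne : (SBar ρ x t ∩ msupp ρ).Nonempty) :
    nuBar ρ x' t ≤ nuBar ρ x t - (x' - x) * mBar ρ x t := by
  set y := ybarStar ρ x t with hy
  by_cases hbr : nuBar ρ x t = Fbar ρ y x t
  · have hmB : mBar ρ x t = m0 ρ y := by rw [mBar, ← hy, if_pos hbr]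
    rw [hmB]
    calc nuBar ρ x' t ≤ Fbar ρ y x' t := nuBar_le ρ x' t hmom y
      _ = Fbar ρ y x t - (x' - x) * m0 ρ y := Fbar_translate ρ y x x' t hmom
      _ = nuBar ρ x t - (x' - x) * m0 ρ y := by rw [hbr]
  · have hmB : mBar ρ x t = m0p ρ y := by rw [mBar, ← hy, if_neg hbr]
    have hyS : y ∈ SBar ρ x t := (ybarStar_mem ρ x t ht hmom hne).1
    have hνP : nuBar ρ x t = FbarP ρ y x t := by
      rcases SBar_value ρ hmom hyS with h | h
      · exact absurd h hbr
      · exact h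
    rw [hmB]
    calc nuBar ρ x' t ≤ FbarP ρ y x' t := nuBar_le_FbarP ρ x' t hmom y
      _ = FbarP ρ y x t - (x' - x) * m0p ρ y := FbarP_translate ρ y x x' t hmom
      _ = nuBar ρ x t - (x' - x) * m0p ρ y := by rw [hνP]

lemma mBar_mono (t : ℝ) (ht : 0 < t) (hmom : Integrable (fun η : ℝ => η) ρ)
    (hne : ∀ x : ℝ, (SBar ρ x t ∩ msupp ρ).Nonempty) :
    Monotone (fun x => mBar ρ x t) := by
  intro x1 x2 h12
  rcases eq_or_lt_of_le h12 with rfl | hlt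
  · exact le_rfl
  have K1 := nuBar_K ρ x1 x2 t ht hmom (hne x1)
  have K2 := nuBar_K ρ x2 x1 t ht hmom (hne x2)
  nlinarith [K1, K2]

lemma mBar_nonneg (x t : ℝ) : 0 ≤ mBar ρ x t := by
  rw [mBar]; split_ifs
  · exact m0_nonneg ρ _
  · exact m0p_nonneg ρ _

lemma mBar_le_Mtot (x t : ℝ) : mBar ρ x t ≤ Mtot ρ := by
  rw [mBar]; split_ifs
  · exact m0_le_Mtot ρ _
  · exact m0p_le_Mtot ρ _

lemma atoms_countable : {x : ℝ | ρ {x} ≠ 0}.Countable := by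
  have h := MeasureTheory.Measure.countable_meas_pos_of_disjoint_iUnion₀ (μ := ρ)
    (As := fun x : ℝ => {x}) (fun x => (measurableSet_singleton x).nullMeasurableSet)
    (fun x y hxy => (Set.disjoint_singleton.2 hxy).aedisjoint)
  refine h.mono fun x hx => ?_
  exact pos_iff_ne_zero.2 hx

end Chunk5

section Chunk6
variable (ρ : Measure ℝ) [IsFiniteMeasure ρ]

lemma part1 (x : ℝ) (hx : ρ {x} = 0) (hmom : Integrable (fun η : ℝ => η) ρ)
    (hne : ∀ x' t : ℝ, 0 < t → (SBar ρ x' t ∩ msupp ρ).Nonempty) :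
    Tendsto (fun t => mBar ρ x t) (𝓝[>] (0 : ℝ)) (𝓝 (m0 ρ x)) := by
  rw [Metric.tendsto_nhdsWithin_nhds]
  intro ε hε
  obtain ⟨T, hT, hTp⟩ := main_est ρ x hx hmom (fun t ht => hne x t ht) ε hε
  refine ⟨T, hT, ?_⟩
  intro t htmem hdist
  rw [Real.dist_eq, sub_zero] at hdist
  have ht : 0 < t := htmem
  rw [Real.dist_eq]
  exact hTp t ht (lt_of_abs_lt hdist)

lemma f_tendsto_zero {f : ℝ → ℝ} (hf : ContDiff ℝ 1 f) (hsupp : HasCompactSupport f) :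
    Tendsto f atTop (𝓝 0) := by
  obtain ⟨r, hr⟩ := hsupp.isCompact.bddAbove
  have hev : ∀ᶠ x in atTop, f x = 0 :=
    (eventually_gt_atTop r).mono fun x hx =>
      image_eq_zero_of_notMem_tsupport fun hmem => absurd (hr hmem) (not_le.2 hx)
  exact Tendsto.congr' (hev.mono fun x h => h.symm) tendsto_const_nhds

lemma ibp {f : ℝ → ℝ} (hf : ContDiff ℝ 1 f) (hsupp : HasCompactSupport f) :
    ∫ x : ℝ, deriv f x * m0 ρ x = - ∫ y, f y ∂ρ := by
  have hf' : Continuous (deriv f) := hf.continuous_deriv le_rfl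
  have hsupp' : HasCompactSupport (deriv f) := hsupp.deriv
  have hint' : Integrable (deriv f) := hf'.integrable_of_hasCompactSupport hsupp'
  set F : ℝ → ℝ → ℝ := fun x η => if η < x then deriv f x else 0 with hF
  have step1 : ∀ x : ℝ, ∫ η, F x η ∂ρ = deriv f x * m0 ρ x := by
    intro x
    have : (fun η => F x η) = (Set.Iio x).indicator (fun _ => deriv f x) := by
      funext η
      by_cases h : η < x
      · rw [hF]; simp only [if_pos h, Set.indicator_of_mem (Set.mem_Iio.2 h)]
      · rw [hF]; simp only [if_neg h, Set.indicator_of_notMem (show η ∉ Set.Iio x from h)]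
    rw [this, integral_indicator_const _ measurableSet_Iio, smul_eq_mul, measureReal_def, m0, mul_comm]
  have step2 : ∀ η : ℝ, ∫ x, F x η = - f η := by
    intro η
    have heq : (fun x => F x η) = (Set.Ioi η).indicator (deriv f) := by
      funext x
      by_cases h : η < x
      · rw [hF]; simp only [if_pos h, Set.indicator_of_mem (Set.mem_Ioi.2 h)]
      · rw [hF]; simp only [if_neg h, Set.indicator_of_notMem (show x ∉ Set.Ioi η from h)]
    rw [heq, integral_indicator measurableSet_Ioi]
    have := integral_Ioi_of_hasDerivAt_of_tendsto (a := η) (f := f) (f' := deriv f)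
      (hf.continuous.continuousWithinAt)
      (fun z _ => ((hf.differentiable one_ne_zero) z).hasDerivAt)
      hint'.integrableOn (f_tendsto_zero hf hsupp)
    rw [this, zero_sub]
  have hintF : Integrable (Function.uncurry F) ((volume : Measure ℝ).prod ρ) := by
    have hmeas : MeasurableSet {p : ℝ × ℝ | p.2 < p.1} :=
      measurableSet_lt measurable_snd measurable_fst
    have heq : Function.uncurry F = {p : ℝ × ℝ | p.2 < p.1}.indicator (fun p => deriv f p.1) := by
      funext p
      by_cases h : p.2 < p.1
      · rw [Function.uncurry, hF]
        simp only [if_pos h, Set.indicator_of_mem (show p ∈ {p : ℝ × ℝ | p.2 < p.1} from h)]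
      · rw [Function.uncurry, hF]
        simp only [if_neg h, Set.indicator_of_notMem (show p ∉ {p : ℝ × ℝ | p.2 < p.1} from h)]
    have hbase : Integrable (fun p : ℝ × ℝ => deriv f p.1) ((volume : Measure ℝ).prod ρ) := by
      have := hint'.mul_prod (integrable_const (1:ℝ)) (ν := ρ)
      simpa using this
    rw [heq]
    refine hbase.norm.mono' ?_ ?_
    · exact (hf'.comp continuous_fst).aestronglyMeasurable.indicator hmeas
    · exact Filter.Eventually.of_forall fun p => norm_indicator_le_norm_self _ p
  have hswap := integral_integral_swap (f := F) hintF
  calc ∫ x : ℝ, deriv f x * m0 ρ x = ∫ x : ℝ, ∫ η, F x η ∂ρ := by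
        refine integral_congr_ae (Filter.Eventually.of_forall fun x => (step1 x).symm)
    _ = ∫ η, (∫ x, F x η) ∂ρ := hswap
    _ = ∫ η, (- f η) ∂ρ := integral_congr_ae (Filter.Eventually.of_forall fun η => step2 η)
    _ = - ∫ y, f y ∂ρ := integral_neg f

lemma part2 (hmom : Integrable (fun η : ℝ => η) ρ)
    (hne : ∀ x t : ℝ, 0 < t → (SBar ρ x t ∩ msupp ρ).Nonempty)
    {f : ℝ → ℝ} (hf : ContDiff ℝ 1 f) (hsupp : HasCompactSupport f) :
    Tendsto (fun t => -∫ x : ℝ, deriv f x * mBar ρ x t)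
      (𝓝[>] (0 : ℝ)) (𝓝 (∫ y, f y ∂ρ)) := by
  have hf' : Continuous (deriv f) := hf.continuous_deriv le_rfl
  have hsupp' : HasCompactSupport (deriv f) := hsupp.deriv
  have hint' : Integrable (deriv f) := hf'.integrable_of_hasCompactSupport hsupp'
  have hev : ∀ᶠ t in 𝓝[>] (0:ℝ), t ∈ Set.Ioi (0:ℝ) := self_mem_nhdsWithin
  have key : Tendsto (fun t => ∫ x : ℝ, deriv f x * mBar ρ x t) (𝓝[>] (0 : ℝ))
      (𝓝 (∫ x : ℝ, deriv f x * m0 ρ x)) := by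
    refine tendsto_integral_filter_of_dominated_convergence
      (fun x => ‖deriv f x‖ * Mtot ρ) ?_ ?_ ?_ ?_
    · refine hev.mono fun t (ht : 0 < t) => ?_
      exact hf'.aestronglyMeasurable.mul
        ((mBar_mono ρ t ht hmom (fun x => hne x t ht)).measurable).aestronglyMeasurable
    · refine hev.mono fun t (ht : 0 < t) => ?_
      refine Filter.Eventually.of_forall fun x => ?_
      rw [norm_mul]
      refine mul_le_mul_of_nonneg_left ?_ (norm_nonneg _)
      rw [Real.norm_eq_abs, abs_of_nonneg (mBar_nonneg ρ x t)]
      exact mBar_le_Mtot ρ x t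
    · exact hint'.norm.mul_const _
    · have hae : ∀ᵐ x : ℝ ∂(volume : Measure ℝ), ρ {x} = 0 := by
        have hcnt := atoms_countable ρ
        have hnull : (volume : Measure ℝ) {x : ℝ | ρ {x} ≠ 0} = 0 :=
          Set.Countable.measure_zero hcnt _
        rw [ae_iff]
        convert hnull using 2
      refine hae.mono fun x hx => ?_
      exact (part1 ρ x hx hmom hne).const_mul (deriv f x)
  have := key.neg
  rw [ibp ρ hf hsupp, neg_neg] at this
  exact this

end Chunk6

theorem stmt19 (ρ : Measure ℝ) [IsFiniteMeasure ρ] (hρ : ρ ≠ 0)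
    (hmom : Integrable (fun η : ℝ => η) ρ)
    (hne : ∀ x t : ℝ, 0 < t → (SBar ρ x t ∩ msupp ρ).Nonempty) :
    (∀ x : ℝ, ρ {x} = 0 →
      Tendsto (fun t => mBar ρ x t) (𝓝[>] (0 : ℝ)) (𝓝 (m0 ρ x))) ∧
    (∀ f : ℝ → ℝ, ContDiff ℝ 1 f → HasCompactSupport f →
      Tendsto (fun t => -∫ x : ℝ, deriv f x * mBar ρ x t)
        (𝓝[>] (0 : ℝ)) (𝓝 (∫ y, f y ∂ρ))) := by
  exact ⟨fun x hx => part1 ρ x hx hmom hne, fun f hf hsupp => part2 ρ hmom hne hf hsupp⟩
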